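/- Let x_1, ..., x_n be i.i.d. real random variables with E[x_1²] = 1 and B = E[x_1⁴] < ∞, and suppose (2n)^{1/2} ≤ d ≤ n/8. With Z_0 the d-fold tensor product vector of the x_i (coordinates indexed by d-subsets of {1,...,n}) and N = C(n,d), one has Var(‖Z_0‖²) ≥ N² · ((1 - B^{-d²/n})/8) · (B/(8e⁴))^{d²/n}. -/

import Mathlib

open MeasureTheory ProbabilityTheory

lemma aux_prod_int {Ω : Type*} [MeasureSpace Ω] [IsProbabilityMeasure (ℙ : Measure Ω)]
    {ι : Type*} {f : ι → Ω → ℝ}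
    (hindep : iIndepFun f ℙ) (hmeas : ∀ i, Measurable (f i))
    (hint : ∀ i, Integrable (f i) ℙ) (A : Finset ι) :
    Integrable (fun ω => ∏ i ∈ A, f i ω) ℙ ∧
      ∫ ω, ∏ i ∈ A, f i ω = ∏ i ∈ A, ∫ ω, f i ω := by
  classical
  induction A using Finset.induction with
  | empty => simp
  | @insert a A ha ih =>

    obtain ⟨ih1, ih2⟩ := ih
    have hIF : IndepFun (∏ j ∈ A, f j) (f a) ℙ :=
      hindep.indepFun_finsetProd_of_notMem hmeas ha
    have hprodfn : (∏ j ∈ A, f j) = fun ω => ∏ j ∈ A, f j ω := by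
      funext ω; simp [Finset.prod_apply]
    have hint1 : Integrable (∏ j ∈ A, f j) ℙ := by rwa [hprodfn]
    have hint2 : Integrable ((∏ j ∈ A, f j) * f a) ℙ := hIF.integrable_mul hint1 (hint a)
    have heq : (fun ω => ∏ i ∈ insert a A, f i ω) = (∏ j ∈ A, f j) * f a := by
      funext ω; simp [Finset.prod_insert ha, hprodfn, mul_comm]
    constructor
    · rwa [heq]
    · rw [show (∫ ω, ∏ i ∈ insert a A, f i ω) = ∫ ω, ((∏ j ∈ A, f j) * f a) ω by rw [heq]]
      rw [hIF.integral_mul_eq_mul_integral hint1.aestronglyMeasurable (hint a).aestronglyMeasurable]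
      rw [Finset.prod_insert ha, hprodfn]
      rw [ih2]; ring


lemma aux_moment {Ω : Type*} [MeasureSpace Ω] [IsProbabilityMeasure (ℙ : Measure Ω)]
    {n : ℕ} {x : Fin n → Ω → ℝ} (hmeas : ∀ i, Measurable (x i))
    (hindep : iIndepFun x ℙ)
    (hm2 : ∀ i, ∫ ω, (x i ω) ^ 2 = 1)
    (hm4int : ∀ i, Integrable (fun ω => (x i ω) ^ 4) ℙ)
    {B : ℝ} (hB : ∀ i, ∫ ω, (x i ω) ^ 4 = B) (s t : Finset (Fin n)) :
    Integrable (fun ω => (∏ i ∈ s, x i ω) ^ 2 * (∏ i ∈ t, x i ω) ^ 2) ℙ ∧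
      ∫ ω, (∏ i ∈ s, x i ω) ^ 2 * (∏ i ∈ t, x i ω) ^ 2 = B ^ (s ∩ t).card := by
  classical
  set e : Fin n → ℕ := fun i => (if i ∈ s then 2 else 0) + (if i ∈ t then 2 else 0) with he
  set g : Fin n → Ω → ℝ := fun i ω => x i ω ^ e i with hg
  have hgindep : iIndepFun g ℙ :=
    hindep.comp (fun i y => y ^ e i) (fun i => measurable_id.pow_const _)
  have hgmeas : ∀ i, Measurable (g i) := fun i => (hmeas i).pow_const _
  have hgint : ∀ i, Integrable (g i) ℙ := by
    intro i
    have h4 : Integrable (fun ω => 1 + x i ω ^ 4) ℙ := (integrable_const 1).add (hm4int i)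
    have hx2 : Integrable (fun ω => x i ω ^ 2) ℙ := by
      refine h4.mono' ((hmeas i).pow_const 2).aestronglyMeasurable ?_
      filter_upwards with ω
      rw [Real.norm_eq_abs, abs_of_nonneg (sq_nonneg _)]
      nlinarith [sq_nonneg (x i ω), sq_nonneg (x i ω ^ 2 - 1)]
    have : e i = 0 ∨ e i = 2 ∨ e i = 4 := by
      simp only [he]; split_ifs <;> norm_num
    rcases this with h | h | h <;> simp only [hg, h]
    · simpa using (integrable_const (1 : ℝ))
    · exact hx2
    · exact hm4int i
  have key : ∀ ω, (∏ i ∈ s, x i ω) ^ 2 * (∏ i ∈ t, x i ω) ^ 2 = ∏ i, g i ω := by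
    intro ω
    have h1 : (∏ i ∈ s, x i ω) ^ 2 = ∏ i, (if i ∈ s then x i ω ^ 2 else 1) := by
      rw [Finset.prod_ite_mem, Finset.univ_inter, Finset.prod_pow]
    have h2 : (∏ i ∈ t, x i ω) ^ 2 = ∏ i, (if i ∈ t then x i ω ^ 2 else 1) := by
      rw [Finset.prod_ite_mem, Finset.univ_inter, Finset.prod_pow]
    rw [h1, h2, ← Finset.prod_mul_distrib]
    refine Finset.prod_congr rfl fun i _ => ?_
    simp only [hg, he]
    split_ifs <;> simp [pow_add] <;> ring
  have hgval : ∀ i, ∫ ω, g i ω = if i ∈ s ∩ t then B else 1 := by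
    intro i
    by_cases hs : i ∈ s <;> by_cases ht : i ∈ t <;>
      simp [hg, he, hs, ht, Finset.mem_inter, hB i, hm2 i]
  obtain ⟨hint', heq'⟩ := aux_prod_int hgindep hgmeas hgint Finset.univ
  constructor
  · exact hint'.congr (by filter_upwards with ω using (key ω).symm)
  · calc ∫ ω, (∏ i ∈ s, x i ω) ^ 2 * (∏ i ∈ t, x i ω) ^ 2
        = ∫ ω, ∏ i, g i ω := by congr 1; funext ω; exact key ω
      _ = ∏ i, ∫ ω, g i ω := heq'
      _ = ∏ i, (if i ∈ s ∩ t then B else 1) := Finset.prod_congr rfl fun i _ => hgval i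
      _ = B ^ (s ∩ t).card := by
          rw [Finset.prod_ite_mem, Finset.univ_inter, Finset.prod_const]

lemma aux_variance {Ω : Type*} [MeasureSpace Ω] [IsProbabilityMeasure (ℙ : Measure Ω)]
    {n : ℕ} {x : Fin n → Ω → ℝ} (hmeas : ∀ i, Measurable (x i))
    (hindep : iIndepFun x ℙ)
    (hm2 : ∀ i, ∫ ω, (x i ω) ^ 2 = 1)
    (hm4int : ∀ i, Integrable (fun ω => (x i ω) ^ 4) ℙ)
    {B : ℝ} (hB : ∀ i, ∫ ω, (x i ω) ^ 4 = B) (d : ℕ) :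
    variance (fun ω => ∑ s ∈ Finset.powersetCard d (Finset.univ : Finset (Fin n)),
        (∏ i ∈ s, x i ω) ^ 2) ℙ
      = ∑ s ∈ Finset.powersetCard d (Finset.univ : Finset (Fin n)),
          ∑ t ∈ Finset.powersetCard d (Finset.univ : Finset (Fin n)),
            (B ^ (s ∩ t).card - 1) := by
  classical
  set PS := Finset.powersetCard d (Finset.univ : Finset (Fin n)) with hPS
  set P : Finset (Fin n) → Ω → ℝ := fun s ω => (∏ i ∈ s, x i ω) ^ 2 with hP
  have hPP := aux_moment hmeas hindep hm2 hm4int hB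
  have hPint : ∀ s : Finset (Fin n), Integrable (P s) ℙ := by
    intro s
    have := (hPP s ∅).1
    simpa [hP] using this
  have hP1 : ∀ s : Finset (Fin n), ∫ ω, P s ω = 1 := by
    intro s
    have := (hPP s ∅).2
    simpa [hP] using this
  have hPmeas : ∀ s : Finset (Fin n), Measurable (P s) := by
    intro s
    exact (Finset.measurable_prod s (fun i _ => hmeas i)).pow_const 2
  have hPsq : ∀ s t : Finset (Fin n), Integrable (fun ω => P s ω * P t ω) ℙ :=
    fun s t => (hPP s t).1
  have hZmem : MemLp (fun ω => ∑ s ∈ PS, P s ω) 2 ℙ := by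
    have : (fun ω => ∑ s ∈ PS, P s ω) = ∑ s ∈ PS, P s := by
      funext ω; simp [Finset.sum_apply]
    rw [this]
    refine memLp_finset_sum' _ (fun s _ => ?_)
    refine (memLp_two_iff_integrable_sq (hPmeas s).aestronglyMeasurable).2 ?_
    have := hPsq s s
    refine this.congr ?_
    filter_upwards with ω using by simp [sq]
  rw [variance_eq_sub hZmem]
  have hZint : ∫ ω, (fun ω => ∑ s ∈ PS, P s ω) ω = (PS.card : ℝ) := by
    simp only
    rw [integral_finset_sum _ (fun s _ => hPint s)]
    simp [hP1]
  have hZsq : ∫ ω, ((fun ω => ∑ s ∈ PS, P s ω) ^ 2) ω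
      = ∑ s ∈ PS, ∑ t ∈ PS, (B : ℝ) ^ (s ∩ t).card := by
    have heq : ∀ ω : Ω, ((fun ω => ∑ s ∈ PS, P s ω) ^ 2) ω
        = ∑ s ∈ PS, ∑ t ∈ PS, P s ω * P t ω := by
      intro ω
      simp only [Pi.pow_apply, sq]
      rw [Finset.sum_mul_sum]
    rw [show (fun ω => ((fun ω => ∑ s ∈ PS, P s ω) ^ 2) ω) = fun ω => ∑ s ∈ PS, ∑ t ∈ PS, P s ω * P t ω from funext heq]
    rw [integral_finset_sum _ (fun s _ => integrable_finset_sum _ (fun t _ => hPsq s t))]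
    refine Finset.sum_congr rfl fun s _ => ?_
    rw [integral_finset_sum _ (fun t _ => hPsq s t)]
    exact Finset.sum_congr rfl fun t _ => (hPP s t).2
  rw [hZsq, hZint]
  rw [show ((PS.card : ℝ)) ^ 2 = ∑ s ∈ PS, ∑ t ∈ PS, (1 : ℝ) by
    simp only [Finset.sum_const, nsmul_eq_mul, mul_one]; ring]
  rw [← Finset.sum_sub_distrib]
  exact Finset.sum_congr rfl fun s _ => by rw [← Finset.sum_sub_distrib]

lemma aux_count {n d k : ℕ} (hkd : k ≤ d) {B : ℝ} (hB1 : 1 ≤ B) :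
    (n.choose d : ℝ) * (d.choose k) * ((n - d).choose (d - k)) * (B ^ k - 1)
      ≤ ∑ s ∈ Finset.powersetCard d (Finset.univ : Finset (Fin n)),
          ∑ t ∈ Finset.powersetCard d (Finset.univ : Finset (Fin n)),
            (B ^ (s ∩ t).card - 1) := by
  classical
  set PS := Finset.powersetCard d (Finset.univ : Finset (Fin n)) with hPS
  have hnonneg : ∀ c : ℕ, (0 : ℝ) ≤ B ^ c - 1 := fun c => by
    linarith [one_le_pow₀ hB1 (n := c)]
  set F : Finset (Fin n) × Finset (Fin n) → ℝ := fun p => B ^ (p.1 ∩ p.2).card - 1 with hF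
  have hRHS : (∑ s ∈ PS, ∑ t ∈ PS, (B ^ (s ∩ t).card - 1)) = ∑ p ∈ PS ×ˢ PS, F p := by
    rw [Finset.sum_product]
  rw [hRHS]
  set T := PS.sigma (fun s => (Finset.powersetCard k s) ×ˢ (Finset.powersetCard (d - k) sᶜ))
    with hT
  set φ : (Σ _ : Finset (Fin n), Finset (Fin n) × Finset (Fin n)) →
      Finset (Fin n) × Finset (Fin n) := fun q => (q.1, q.2.1 ∪ q.2.2) with hφ
  have hmem : ∀ q ∈ T, (q.1 ∈ PS ∧ q.2.1 ⊆ q.1 ∧ q.2.1.card = k ∧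
      q.2.2 ⊆ q.1ᶜ ∧ q.2.2.card = d - k) := by
    intro q hq
    simp only [hT, Finset.mem_sigma, Finset.mem_product, Finset.mem_powersetCard] at hq
    tauto
  -- key facts for elements of T
  have hab : ∀ q ∈ T, q.1 ∩ (q.2.1 ∪ q.2.2) = q.2.1 ∧ (q.2.1 ∪ q.2.2) \ q.1 = q.2.2 ∧
      (q.2.1 ∪ q.2.2).card = d := by
    intro q hq
    obtain ⟨h1, h2, h3, h4, h5⟩ := hmem q hq
    have hdisj : Disjoint q.2.1 q.2.2 := by
      refine Finset.disjoint_left.2 fun a ha ha' => ?_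
      exact (Finset.mem_compl.1 (h4 ha')) (h2 ha)
    have hbs : Disjoint q.1 q.2.2 := by
      refine Finset.disjoint_left.2 fun a ha ha' => ?_
      exact (Finset.mem_compl.1 (h4 ha')) ha
    refine ⟨?_, ?_, ?_⟩
    · rw [Finset.inter_union_distrib_left, Finset.inter_eq_right.2 h2,
        Finset.disjoint_iff_inter_eq_empty.1 hbs, Finset.union_empty]
    · rw [Finset.union_sdiff_distrib, Finset.sdiff_eq_empty_iff_subset.2 h2,
        Finset.sdiff_eq_self_iff_disjoint.2 hbs.symm, Finset.empty_union]
    · rw [Finset.card_union_of_disjoint hdisj, h3, h5, Nat.add_sub_cancel' hkd]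
  have hinj : ∀ q ∈ T, ∀ q' ∈ T, φ q = φ q' → q = q' := by
    intro q hq q' hq' heq
    obtain ⟨hq1, hq2, _⟩ := hab q hq
    obtain ⟨hq1', hq2', _⟩ := hab q' hq'
    have hs : q.1 = q'.1 := congrArg Prod.fst heq
    have hu : q.2.1 ∪ q.2.2 = q'.2.1 ∪ q'.2.2 := congrArg Prod.snd heq
    have ha : q.2.1 = q'.2.1 := by rw [← hq1, ← hq1', hs, hu]
    have hb : q.2.2 = q'.2.2 := by rw [← hq2, ← hq2', hs, hu]
    obtain ⟨s, a, b⟩ := q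
    obtain ⟨s', a', b'⟩ := q'
    simp only at hs ha hb
    subst hs; subst ha; subst hb; rfl
  have himg : T.image φ ⊆ PS ×ˢ PS := by
    intro p hp
    obtain ⟨q, hq, rfl⟩ := Finset.mem_image.1 hp
    obtain ⟨h1, _, _, _, _⟩ := hmem q hq
    obtain ⟨_, _, hcard⟩ := hab q hq
    simp only [hφ, Finset.mem_product]
    exact ⟨h1, Finset.mem_powersetCard.2 ⟨Finset.subset_univ _, hcard⟩⟩
  have hcardT : (T.card : ℝ)
      = (n.choose d : ℝ) * (d.choose k) * ((n - d).choose (d - k)) := by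
    rw [hT, Finset.card_sigma]
    have hc : ∀ s ∈ PS, (Finset.powersetCard k s ×ˢ Finset.powersetCard (d - k) sᶜ).card
        = d.choose k * (n - d).choose (d - k) := by
      intro s hs
      have hcs : s.card = d := (Finset.mem_powersetCard.1 hs).2
      rw [Finset.card_product, Finset.card_powersetCard, Finset.card_powersetCard,
        Finset.card_compl, hcs, Fintype.card_fin]
    rw [Finset.sum_congr rfl hc, Finset.sum_const, hPS, Finset.card_powersetCard,
      Finset.card_univ, Fintype.card_fin, smul_eq_mul]
    push_cast; ring
  calc (n.choose d : ℝ) * (d.choose k) * ((n - d).choose (d - k)) * (B ^ k - 1)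
      = (T.card : ℝ) * (B ^ k - 1) := by rw [hcardT]
    _ = ∑ _q ∈ T, (B ^ k - 1) := by rw [Finset.sum_const, nsmul_eq_mul]
    _ = ∑ q ∈ T, F (φ q) := by
        refine Finset.sum_congr rfl fun q hq => ?_
        obtain ⟨hq1, _, _⟩ := hab q hq
        obtain ⟨_, _, hq3, _, _⟩ := hmem q hq
        simp only [hF, hφ]
        rw [hq1, hq3]
    _ = ∑ p ∈ T.image φ, F p := (Finset.sum_image hinj).symm
    _ ≤ ∑ p ∈ PS ×ˢ PS, F p :=
        Finset.sum_le_sum_of_subset_of_nonneg himg (fun p _ _ => hnonneg _)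

set_option maxHeartbeats 1000000 in
lemma aux_comb {n d k : ℕ} (h2n : 2 * n ≤ d ^ 2) (hdn : 8 * d ≤ n) (hd16 : 16 ≤ d)
    (hk : k = ⌈(d : ℝ) ^ 2 / n⌉₊) :
    (n.choose d : ℝ) ≤ (8 / 3 * Real.exp 3) ^ k * (d.choose k) * ((n - d).choose (d - k)) := by
  have hd0 : 0 < d := by omega
  have hn0 : 0 < n := by omega
  have hrn0 : (0 : ℝ) < n := by exact_mod_cast hn0
  have hrd0 : (0 : ℝ) < d := by exact_mod_cast hd0
  -- basic real facts about k
  have hr1 : (d : ℝ) ^ 2 ≤ k * n := by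
    have h := Nat.le_ceil ((d : ℝ) ^ 2 / n)
    rw [← hk] at h
    rw [div_le_iff₀ hrn0] at h
    linarith
  have hr2 : (k : ℝ) * n ≤ d ^ 2 + n := by
    have h := Nat.ceil_lt_add_one (a := (d : ℝ) ^ 2 / n) (by positivity)
    rw [← hk] at h
    have h' : (k : ℝ) ≤ (d : ℝ) ^ 2 / n + 1 := le_of_lt h
    have := mul_le_mul_of_nonneg_right h' (le_of_lt hrn0)
    rw [add_mul, div_mul_cancel₀ _ (ne_of_gt hrn0)] at this
    linarith
  have hrdn : 8 * (d : ℝ) ≤ n := by exact_mod_cast hdn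
  have hr2n : 2 * (n : ℝ) ≤ (d : ℝ) ^ 2 := by exact_mod_cast h2n
  have h2kn : 2 * ((k : ℝ) * n) ≤ 3 * d ^ 2 := by linarith
  have h16k : 16 * (k : ℝ) ≤ 3 * d := by
    nlinarith [mul_le_mul_of_nonneg_left hrdn (Nat.cast_nonneg k : (0:ℝ) ≤ k)]
  have hkd : k ≤ d := by
    have : (k : ℝ) ≤ d := by linarith
    exact_mod_cast this
  have hk2 : 2 ≤ k := by
    have : (2 : ℝ) ≤ k := by
      nlinarith
    exact_mod_cast this
  -- names
  set D1n : ℕ := d + 1 - k with hD1n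
  set a : ℕ := n - 2 * d with han
  have hcastD1 : (D1n : ℝ) = (d : ℝ) + 1 - k := by
    rw [hD1n]; push_cast [Nat.cast_sub (by omega : k ≤ d + 1)]; ring
  have hcasta : (a : ℝ) = (n : ℝ) - 2 * d := by
    rw [han]; push_cast [Nat.cast_sub (by omega : 2 * d ≤ n)]; ring
  have hD1pos : (0 : ℝ) < D1n := by rw [hcastD1]; linarith
  have hapos : (0 : ℝ) < a := by rw [hcasta]; linarith
  -- f1 : choose n d * d! ≤ n^k * n^(d-k)
  have f1 : (n.choose d : ℝ) * d.factorial ≤ (n : ℝ) ^ k * (n : ℝ) ^ (d - k) := by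
    have h := Nat.descFactorial_le_pow n d
    rw [Nat.descFactorial_eq_factorial_mul_choose] at h
    have : ((d.factorial * n.choose d : ℕ) : ℝ) ≤ ((n ^ d : ℕ) : ℝ) := by exact_mod_cast h
    push_cast at this
    rw [← pow_add, Nat.add_sub_cancel' hkd]
    linarith
  -- f2 : D1n^k ≤ k! * choose d k
  have f2 : ((D1n : ℝ)) ^ k ≤ (k.factorial : ℝ) * d.choose k := by
    have h := Nat.pow_sub_le_descFactorial d k
    rw [Nat.descFactorial_eq_factorial_mul_choose] at h
    exact_mod_cast h
  -- f3 : a^(d-k) ≤ (d-k)! * choose (n-d) (d-k)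
  have f3 : ((a : ℝ)) ^ (d - k) ≤ ((d - k).factorial : ℝ) * (n - d).choose (d - k) := by
    have h1 : a ^ (d - k) ≤ (n - d + 1 - (d - k)) ^ (d - k) :=
      Nat.pow_le_pow_left (by omega) _
    have h2 := Nat.pow_sub_le_descFactorial (n - d) (d - k)
    rw [Nat.descFactorial_eq_factorial_mul_choose] at h2
    exact_mod_cast le_trans h1 h2
  -- f4 : (d-k)! * D1n^k ≤ d!
  have f4 : ((d - k).factorial : ℝ) * (D1n : ℝ) ^ k ≤ (d.factorial : ℝ) := by
    have h := Nat.factorial_mul_descFactorial hkd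
    have h2 := Nat.mul_le_mul_left ((d - k).factorial) (Nat.pow_sub_le_descFactorial d k)
    rw [h] at h2
    exact_mod_cast h2
  -- f5 : k! ≤ k^k
  have f5 : (k.factorial : ℝ) ≤ (k : ℝ) ^ k := by exact_mod_cast Nat.factorial_le_pow k
  -- f6 : n^k * k^k ≤ (3/2)^k * (d^2)^k
  have f6 : (n : ℝ) ^ k * (k : ℝ) ^ k ≤ (3 / 2) ^ k * ((d : ℝ) ^ 2) ^ k := by
    rw [← mul_pow, ← mul_pow]
    refine pow_le_pow_left₀ (by positivity) ?_ k
    nlinarith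
  -- f7 : (d^2)^k ≤ ((16/9) * D1n^2)^k
  have h34 : (3 / 4 : ℝ) * d ≤ (D1n : ℝ) := by rw [hcastD1]; linarith
  have f7 : ((d : ℝ) ^ 2) ^ k ≤ ((16 / 9) * (D1n : ℝ) ^ 2) ^ k := by
    refine pow_le_pow_left₀ (by positivity) ?_ k
    have hsq := mul_le_mul h34 h34 (by positivity) (Nat.cast_nonneg D1n)
    nlinarith [hsq]
  -- f8 : n^(d-k) ≤ (exp 3)^k * a^(d-k)
  have f8 : (n : ℝ) ^ (d - k) ≤ Real.exp 3 ^ k * (a : ℝ) ^ (d - k) := by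
    have hstep : (n : ℝ) ≤ (a : ℝ) * Real.exp (3 * d / n) := by
      have he := Real.add_one_le_exp (3 * (d : ℝ) / n)
      have hE0 : (0 : ℝ) < Real.exp (3 * d / n) := Real.exp_pos _
      rw [hcasta]
      have h2d0 : (0 : ℝ) ≤ (n : ℝ) - 2 * d := by linarith
      have h2 := mul_le_mul_of_nonneg_right (mul_le_mul_of_nonneg_left he h2d0) (le_of_lt hrn0)
      have h3 : (((n : ℝ) - 2 * d) * (3 * (d : ℝ) / n + 1)) * n
          = ((n : ℝ) - 2 * d) * (3 * (d : ℝ) + n) := by field_simp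
      rw [h3] at h2
      have key2 : (n : ℝ) * n ≤ ((n : ℝ) - 2 * d) * (3 * d + n) := by nlinarith
      exact le_of_mul_le_mul_right (by linarith) hrn0
    calc (n : ℝ) ^ (d - k) ≤ ((a : ℝ) * Real.exp (3 * d / n)) ^ (d - k) :=
          pow_le_pow_left₀ (by positivity) hstep _
      _ = (a : ℝ) ^ (d - k) * Real.exp ((d - k : ℕ) * (3 * d / n)) := by
          rw [mul_pow, Real.exp_nat_mul]
          try rfl
      _ ≤ (a : ℝ) ^ (d - k) * Real.exp (3 * k) := by
          refine mul_le_mul_of_nonneg_left (Real.exp_le_exp.2 ?_) (by positivity)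
          have hdk : ((d - k : ℕ) : ℝ) ≤ (d : ℝ) := by
            have : d - k ≤ d := Nat.sub_le d k
            exact_mod_cast this
          calc ((d - k : ℕ) : ℝ) * (3 * d / n) ≤ (d : ℝ) * (3 * d / n) := by
                refine mul_le_mul_of_nonneg_right hdk (by positivity)
            _ = 3 * ((d:ℝ) ^2) / n := by ring
            _ ≤ 3 * k := by rw [div_le_iff₀ hrn0]; nlinarith
      _ = Real.exp 3 ^ k * (a : ℝ) ^ (d - k) := by
          rw [mul_comm, show (3 : ℝ) * k = (k : ℕ) * 3 by push_cast; ring, Real.exp_nat_mul]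
  -- assemble
  have hFD0 : (0 : ℝ) < d.factorial := by exact_mod_cast d.factorial_pos
  have hF10 : (0 : ℝ) < k.factorial := by exact_mod_cast k.factorial_pos
  have key : (n.choose d : ℝ) * ((d.factorial : ℝ) * k.factorial)
      ≤ (8 / 3 * Real.exp 3) ^ k * (d.choose k) * ((n - d).choose (d - k))
        * ((d.factorial : ℝ) * k.factorial) := by
    calc (n.choose d : ℝ) * ((d.factorial : ℝ) * k.factorial)
        = ((n.choose d : ℝ) * d.factorial) * k.factorial := by ring
      _ ≤ ((n : ℝ) ^ k * (n : ℝ) ^ (d - k)) * k.factorial := by gcongr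
      _ ≤ ((n : ℝ) ^ k * (n : ℝ) ^ (d - k)) * (k : ℝ) ^ k := by gcongr
      _ = ((n : ℝ) ^ k * (k : ℝ) ^ k) * (n : ℝ) ^ (d - k) := by ring
      _ ≤ ((3 / 2) ^ k * ((16 / 9) * (D1n : ℝ) ^ 2) ^ k) * (Real.exp 3 ^ k * (a : ℝ) ^ (d - k)) := by
          refine mul_le_mul ?_ f8 (by positivity) (by positivity)
          exact le_trans f6 (mul_le_mul_of_nonneg_left f7 (by positivity))
      _ = (8 / 3 * Real.exp 3) ^ k * ((D1n : ℝ) ^ k * ((D1n : ℝ) ^ k * (a : ℝ) ^ (d - k))) := by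
          rw [mul_pow (8/3 : ℝ), mul_pow (16/9 : ℝ)]
          have h1 : ((3:ℝ)/2) ^ k * ((16:ℝ)/9) ^ k = ((8:ℝ)/3) ^ k := by
            rw [← mul_pow]; norm_num
          have h2 : ((D1n : ℝ) ^ 2) ^ k = (D1n : ℝ) ^ k * (D1n : ℝ) ^ k := by
            rw [← pow_mul, two_mul, pow_add]
          rw [h2, ← h1]
          ring
      _ ≤ (8 / 3 * Real.exp 3) ^ k *
            (((k.factorial : ℝ) * d.choose k) * ((d.factorial : ℝ) * (n - d).choose (d - k))) := by
          have h9 : (D1n : ℝ) ^ k * (a : ℝ) ^ (d - k)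
              ≤ (d.factorial : ℝ) * (n - d).choose (d - k) := by
            calc (D1n : ℝ) ^ k * (a : ℝ) ^ (d - k)
                ≤ (D1n : ℝ) ^ k * (((d - k).factorial : ℝ) * (n - d).choose (d - k)) := by
                  gcongr
              _ = (((d - k).factorial : ℝ) * (D1n : ℝ) ^ k) * (n - d).choose (d - k) := by
                  ring
              _ ≤ (d.factorial : ℝ) * (n - d).choose (d - k) := by
                  exact mul_le_mul_of_nonneg_right f4 (Nat.cast_nonneg _)
          have h10 : (D1n : ℝ) ^ k * ((D1n : ℝ) ^ k * (a : ℝ) ^ (d - k))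
              ≤ ((k.factorial : ℝ) * d.choose k) * ((d.factorial : ℝ) * (n - d).choose (d - k)) :=
            mul_le_mul f2 h9 (by positivity) (by positivity)
          exact mul_le_mul_of_nonneg_left h10 (by positivity)
      _ = (8 / 3 * Real.exp 3) ^ k * (d.choose k) * ((n - d).choose (d - k))
            * ((d.factorial : ℝ) * k.factorial) := by ring
  have := le_of_mul_le_mul_right key (by positivity : (0:ℝ) < (d.factorial : ℝ) * k.factorial)
  exact this

lemma aux_num {k : ℕ} {t : ℝ} (ht2 : 2 ≤ t) (htk : t ≤ k) (hkt : (k : ℝ) < t + 1) :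
    (8 / 3 * Real.exp 3) ^ k ≤ 8 * (8 * Real.exp 4) ^ t := by
  have hbase1 : (1 : ℝ) ≤ 8 / 3 * Real.exp 3 := by
    nlinarith [Real.exp_pos 3, Real.one_le_exp (by norm_num : (0:ℝ) ≤ 3)]
  have hbase2 : (1 : ℝ) ≤ 8 * Real.exp 4 := by
    nlinarith [Real.one_le_exp (by norm_num : (0:ℝ) ≤ 4)]
  by_cases hk4 : k ≤ 3
  · have h1 : (8 / 3 * Real.exp 3) ^ k ≤ (8 / 3 * Real.exp 3) ^ 3 :=
      pow_le_pow_right₀ hbase1 hk4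
    have h2 : (8 * Real.exp 4) ^ (2 : ℝ) ≤ (8 * Real.exp 4) ^ t :=
      Real.rpow_le_rpow_of_exponent_le hbase2 ht2
    have h3 : (8 * Real.exp 4) ^ (2 : ℝ) = 64 * Real.exp 4 ^ 2 := by
      rw [show (2:ℝ) = ((2:ℕ):ℝ) by norm_num, Real.rpow_natCast]
      ring
    have h4 : (8 / 3 * Real.exp 3) ^ 3 ≤ 8 * (64 * Real.exp 4 ^ 2) := by
      have e1 : Real.exp 3 ^ 3 = Real.exp 9 := by
        rw [← Real.exp_nat_mul]; norm_num
      have e2 : Real.exp 4 ^ 2 = Real.exp 8 := by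
        rw [← Real.exp_nat_mul]; norm_num
      have e3 : Real.exp 9 = Real.exp 1 * Real.exp 8 := by
        rw [← Real.exp_add]; norm_num
      have he1 : Real.exp 1 < 3 := by
        have := Real.exp_one_lt_d9; linarith
      have hp8 : (0:ℝ) < Real.exp 8 := Real.exp_pos 8
      rw [mul_pow, e1, e3, e2]
      nlinarith
    calc (8 / 3 * Real.exp 3) ^ k ≤ (8 / 3 * Real.exp 3) ^ 3 := h1
      _ ≤ 8 * (64 * Real.exp 4 ^ 2) := h4
      _ = 8 * (8 * Real.exp 4) ^ (2:ℝ) := by rw [h3]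
      _ ≤ 8 * (8 * Real.exp 4) ^ t := by linarith [h2]
  · push_neg at hk4
    have hk1 : 1 ≤ k := by omega
    have htk1 : ((k - 1 : ℕ) : ℝ) ≤ t := by
      push_cast [Nat.cast_sub hk1]
      linarith
    have h2 : (8 * Real.exp 4) ^ ((k - 1 : ℕ) : ℝ) ≤ (8 * Real.exp 4) ^ t :=
      Real.rpow_le_rpow_of_exponent_le hbase2 htk1
    rw [Real.rpow_natCast] at h2
    have h4 : (8 / 3 * Real.exp 3) ^ k ≤ 8 * (8 * Real.exp 4) ^ (k - 1) := by
      have e2 : Real.exp 3 ^ k ≤ Real.exp 4 ^ (k - 1) := by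
        rw [← Real.exp_nat_mul, ← Real.exp_nat_mul]
        refine Real.exp_le_exp.2 ?_
        have : ((k - 1 : ℕ) : ℝ) = (k : ℝ) - 1 := by push_cast [Nat.cast_sub hk1]; ring
        rw [this]
        have hk4' : (4 : ℝ) ≤ k := by exact_mod_cast hk4
        linarith
      have e1 : ((8:ℝ) / 3) ^ k ≤ 8 ^ k := by
        refine pow_le_pow_left₀ (by norm_num) (by norm_num) k
      calc (8 / 3 * Real.exp 3) ^ k = (8/3:ℝ) ^ k * Real.exp 3 ^ k := by rw [mul_pow]
        _ ≤ 8 ^ k * Real.exp 4 ^ (k - 1) := by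
            exact mul_le_mul e1 e2 (by positivity) (by positivity)
        _ = 8 ^ ((k-1)+1) * Real.exp 4 ^ (k - 1) := by rw [show (k-1)+1 = k by omega]
        _ = 8 * (8 ^ (k-1) * Real.exp 4 ^ (k - 1)) := by rw [pow_succ]; ring
        _ = 8 * (8 * Real.exp 4) ^ (k - 1) := by rw [← mul_pow]
    calc (8 / 3 * Real.exp 3) ^ k ≤ 8 * (8 * Real.exp 4) ^ (k - 1) := h4
      _ ≤ 8 * (8 * Real.exp 4) ^ t := by linarith

lemma aux_B1 {Ω : Type*} [MeasureSpace Ω] [IsProbabilityMeasure (ℙ : Measure Ω)]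
    {f : Ω → ℝ} (hmeas : Measurable f) (hm2 : ∫ ω, f ω ^ 2 = 1)
    (hm4int : Integrable (fun ω => f ω ^ 4) ℙ) : 1 ≤ ∫ ω, f ω ^ 4 := by
  have h4 : Integrable (fun ω => 1 + f ω ^ 4) ℙ := (integrable_const 1).add hm4int
  have hx2 : Integrable (fun ω => f ω ^ 2) ℙ := by
    refine h4.mono' ((hmeas.pow_const 2).aestronglyMeasurable) ?_
    filter_upwards with ω
    rw [Real.norm_eq_abs, abs_of_nonneg (sq_nonneg _)]
    nlinarith [sq_nonneg (f ω), sq_nonneg (f ω ^ 2 - 1)]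
  have h0 : 0 ≤ ∫ ω, (f ω ^ 2 - 1) ^ 2 :=
    integral_nonneg fun ω => sq_nonneg _
  have hexp : ∫ ω, (f ω ^ 2 - 1) ^ 2
      = (∫ ω, f ω ^ 4) - 2 * (∫ ω, f ω ^ 2) + 1 := by
    have heq : (fun ω => (f ω ^ 2 - 1) ^ 2)
        = fun ω => f ω ^ 4 - (2 : ℝ) * f ω ^ 2 + 1 := by
      funext ω; ring
    rw [heq]
    rw [integral_add (by exact (hm4int.sub (hx2.const_mul 2))) (integrable_const 1)]
    rw [integral_sub hm4int (hx2.const_mul 2)]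
    rw [MeasureTheory.integral_const_mul]
    simp
  rw [hexp, hm2] at h0
  linarith

theorem stmt_14 {Ω : Type*} [MeasureSpace Ω] [IsProbabilityMeasure (ℙ : Measure Ω)]
    (n d : ℕ) (hd : Real.sqrt (2 * n) ≤ d) (hdn : 8 * d ≤ n)
    (x : Fin n → Ω → ℝ) (hmeas : ∀ i, Measurable (x i))
    (hindep : iIndepFun x ℙ)
    (hident : ∀ i j, IdentDistrib (x i) (x j) ℙ ℙ)
    (hm2 : ∀ i, ∫ ω, (x i ω) ^ 2 = 1)
    (hm4int : ∀ i, Integrable (fun ω => (x i ω) ^ 4) ℙ)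
    (B : ℝ) (hB : ∀ i, ∫ ω, (x i ω) ^ 4 = B) :
    (n.choose d : ℝ) ^ 2 * ((1 - B ^ (-((d : ℝ) ^ 2 / n))) / 8) *
        (B / (8 * Real.exp 4)) ^ ((d : ℝ) ^ 2 / n) ≤
      variance (fun ω => ∑ s ∈ Finset.powersetCard d (Finset.univ : Finset (Fin n)),
        (∏ i ∈ s, x i ω) ^ 2) ℙ := by
  classical
  have hvarnn : 0 ≤ variance (fun ω => ∑ s ∈ Finset.powersetCard d (Finset.univ : Finset (Fin n)),
      (∏ i ∈ s, x i ω) ^ 2) ℙ := variance_nonneg _ _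
  by_cases hn : n = 0
  · subst hn
    have hd0 : d = 0 := by omega
    subst hd0
    simp only [Nat.cast_zero, ne_eq]
    rw [show -((0 : ℝ) ^ 2 / (0:ℝ)) = 0 by norm_num, Real.rpow_zero]
    simpa using hvarnn
  have hn0 : 0 < n := Nat.pos_of_ne_zero hn
  have hrn0 : (0 : ℝ) < n := by exact_mod_cast hn0
  -- 2n ≤ d²
  have hd2 : 2 * n ≤ d ^ 2 := by
    have h1 : Real.sqrt (2 * n) ^ 2 ≤ (d : ℝ) ^ 2 :=
      pow_le_pow_left₀ (Real.sqrt_nonneg _) hd 2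
    rw [Real.sq_sqrt (by positivity)] at h1
    exact_mod_cast h1
  have hdpos : 0 < d := by
    rcases Nat.eq_zero_or_pos d with h | h
    · subst h; simp at hd2; omega
    · exact h
  have hd16 : 16 ≤ d := by
    have h1 : 16 * d ≤ d * d := by
      calc 16 * d ≤ 2 * n := by omega
        _ ≤ d ^ 2 := hd2
        _ = d * d := sq d
    exact Nat.le_of_mul_le_mul_right (by omega) hdpos
  -- B ≥ 1
  have hB1 : 1 ≤ B := by
    have := aux_B1 (hmeas ⟨0, by omega⟩) (hm2 ⟨0, by omega⟩) (hm4int ⟨0, by omega⟩)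
    rwa [hB ⟨0, by omega⟩] at this
  by_cases hBeq : B = 1
  · subst hBeq
    rw [Real.one_rpow]
    simpa using hvarnn
  have hB1' : 1 < B := lt_of_le_of_ne hB1 (Ne.symm hBeq)
  have hB0 : (0 : ℝ) < B := by linarith
  -- set t and k
  set t : ℝ := (d : ℝ) ^ 2 / n with ht
  set k : ℕ := ⌈t⌉₊ with hk
  have ht0 : 0 ≤ t := by positivity
  have ht2 : 2 ≤ t := by
    rw [ht, le_div_iff₀ hrn0]
    exact_mod_cast hd2
  have htk : t ≤ k := Nat.le_ceil t
  have hkt1 : (k : ℝ) < t + 1 := Nat.ceil_lt_add_one ht0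
  -- k ≤ d
  have hr1 : (d : ℝ) ^ 2 ≤ k * n := by
    have h := htk
    rw [ht, div_le_iff₀ hrn0] at h
    linarith
  have hr2 : (k : ℝ) * n ≤ (d : ℝ) ^ 2 + n := by
    have h' : (k : ℝ) ≤ t + 1 := le_of_lt hkt1
    have := mul_le_mul_of_nonneg_right h' (le_of_lt hrn0)
    rw [add_mul, ht, div_mul_cancel₀ _ (ne_of_gt hrn0)] at this
    linarith
  have hrdn : 8 * (d : ℝ) ≤ n := by exact_mod_cast hdn
  have hr2n : 2 * (n : ℝ) ≤ (d : ℝ) ^ 2 := by exact_mod_cast hd2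
  have hrd0 : (0 : ℝ) < d := by exact_mod_cast hdpos
  have h16k : 16 * (k : ℝ) ≤ 3 * d := by
    nlinarith [mul_le_mul_of_nonneg_left hrdn (Nat.cast_nonneg k : (0:ℝ) ≤ k)]
  have hkd : k ≤ d := by
    have : (k : ℝ) ≤ d := by linarith
    exact_mod_cast this
  -- main ingredients
  have hcomb := aux_comb hd2 hdn hd16 hk
  have hnum := aux_num ht2 htk hkt1
  have hcount := aux_count (n := n) hkd hB1
  have hvar := aux_variance hmeas hindep hm2 hm4int hB d
  rw [hvar]
  refine le_trans ?_ hcount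
  -- pure real inequality now
  set N : ℝ := (n.choose d : ℝ) with hN
  set Cdk : ℝ := (d.choose k : ℝ) with hCdk
  set C2 : ℝ := ((n - d).choose (d - k) : ℝ) with hC2
  set E : ℝ := (8 * Real.exp 4) ^ t with hE
  have hEpos : 0 < E := Real.rpow_pos_of_pos (by positivity) t
  have hN0 : 0 ≤ N := Nat.cast_nonneg _
  have hCC0 : 0 ≤ Cdk * C2 := by positivity
  have h1 : N ≤ 8 * E * (Cdk * C2) := by
    calc N ≤ (8 / 3 * Real.exp 3) ^ k * Cdk * C2 := hcomb
      _ = (8 / 3 * Real.exp 3) ^ k * (Cdk * C2) := by ring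
      _ ≤ (8 * E) * (Cdk * C2) := mul_le_mul_of_nonneg_right hnum hCC0
  have hu1 : B ^ (-t) ≤ 1 :=
    Real.rpow_le_one_of_one_le_of_nonpos hB1 (by linarith)
  have hu0 : 0 ≤ 1 - B ^ (-t) := by linarith
  have hBt0 : 0 < B ^ t := Real.rpow_pos_of_pos hB0 t
  have p1 : (1 - B ^ (-t)) * B ^ t ≤ B ^ k - 1 := by
    have hmulinv : B ^ t * B ^ (-t) = 1 := by
      rw [← Real.rpow_add hB0]; simp
    have hpow : B ^ t ≤ B ^ k := by
      rw [← Real.rpow_natCast B k]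
      exact Real.rpow_le_rpow_of_exponent_le hB1 htk
    nlinarith
  have hgoal : N ^ 2 * ((1 - B ^ (-t)) / 8) * (B / (8 * Real.exp 4)) ^ t
      ≤ N * Cdk * C2 * (B ^ k - 1) := by
    rw [Real.div_rpow (le_of_lt hB0) (by positivity), ← hE]
    have hc0 : 0 ≤ N * ((1 - B ^ (-t)) * B ^ t) := by positivity
    calc N ^ 2 * ((1 - B ^ (-t)) / 8) * (B ^ t / E)
        = (N * ((1 - B ^ (-t)) * B ^ t) * N) / (8 * E) := by ring
      _ ≤ (N * ((1 - B ^ (-t)) * B ^ t) * (8 * E * (Cdk * C2))) / (8 * E) := by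
          refine div_le_div_of_nonneg_right ?_ (by positivity)
          exact mul_le_mul_of_nonneg_left h1 hc0
      _ = N * (Cdk * C2) * ((1 - B ^ (-t)) * B ^ t) := by
          field_simp
      _ ≤ N * (Cdk * C2) * (B ^ k - 1) := by
          refine mul_le_mul_of_nonneg_left p1 (by positivity)
      _ = N * Cdk * C2 * (B ^ k - 1) := by ring
  exact hgoal
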